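/- For every normalized formula A (a Horn implication X ⊸ Y, a ⊕-Horn implication X ⊸ (Y₁ ⊕ Y₂), an &-Horn implication (X₁ ⊸ Y₁) & (X₂ ⊸ Y₂), or an elementary embedded implication (U ⊸ V) ⊸ Y with X, Xᵢ, Y, Yᵢ, U, V simple products), the ⊥-only encoding F_A satisfies #⊥(F_A) ≡ 0 (mod 9N). -/

import Mathlib

/-- Formulas of propositional linear logic. -/
inductive LF where
  | lit : ℕ → LF
  | bot : LF
  | one : LF
  | tensor : LF → LF → LF
  | par : LF → LF → LF
  | limp : LF → LF → LF
  | witha : LF → LF → LF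
  | oplus : LF → LF → LF
  | bang : LF → LF
deriving DecidableEq

open LF

/-- n-fold tensor power, `A^0 = 1`, `A^1 = A`. -/
def tpow (A : LF) : ℕ → LF
  | 0 => one
  | 1 => A
  | n+2 => tensor A (tpow A (n+1))

/-- n-fold par power, `A^[0] = ⊥`, `A^[1] = A`. -/
def ppow (A : LF) : ℕ → LF
  | 0 => bot
  | 1 => A
  | n+2 => par A (ppow A (n+1))

/-- Curried implication `A^⟨n⟩ ⊸ B`. -/
def cimp : ℕ → LF → LF → LF
  | 0, _, B => B
  | n+1, A, B => limp A (cimp n A B)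

/-- Tensor product of a list of positive literals (a simple product). -/
def llprod : List LF → LF
  | [] => one
  | [A] => A
  | A :: B :: l => tensor A (llprod (B :: l))

/-- Simple product of literals given by their indices. -/
def sprod (X : List ℕ) : LF := llprod (X.map lit)

/-- The bottom-count `#⊥`. -/
def botCount : LF → ℤ
  | lit _ => 0
  | bot => 1
  | one => 0
  | tensor A B => botCount A + botCount B
  | par A B => botCount A + botCount B - 1
  | limp A B => botCount B - botCount A
  | witha A B => min (botCount A) (botCount B)
  | oplus A B => max (botCount A) (botCount B)
  | bang A => botCount A

/-- Normalized formulas: Horn, ⊕-Horn, &-Horn, and elementary embedded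
implications over simple products (lists of literal indices). -/
inductive NF where
  | horn : List ℕ → List ℕ → NF
  | ohorn : List ℕ → List ℕ → List ℕ → NF
  | whorn : List ℕ → List ℕ → List ℕ → List ℕ → NF
  | embed : List ℕ → List ℕ → List ℕ → NF
deriving DecidableEq

/-- All simple products occurring in a normalized formula are nonempty. -/
def NF.ok : NF → Prop
  | .horn X Y => X ≠ [] ∧ Y ≠ []
  | .ohorn X Y₁ Y₂ => X ≠ [] ∧ Y₁ ≠ [] ∧ Y₂ ≠ []
  | .whorn X₁ Y₁ X₂ Y₂ => X₁ ≠ [] ∧ Y₁ ≠ [] ∧ X₂ ≠ [] ∧ Y₂ ≠ []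
  | .embed U V Y => U ≠ [] ∧ V ≠ [] ∧ Y ≠ []

/-- The linear-logic formula denoted by a normalized formula. -/
def nfF : NF → LF
  | .horn X Y => limp (sprod X) (sprod Y)
  | .ohorn X Y₁ Y₂ => limp (sprod X) (oplus (sprod Y₁) (sprod Y₂))
  | .whorn X₁ Y₁ X₂ Y₂ => witha (limp (sprod X₁) (sprod Y₁)) (limp (sprod X₂) (sprod Y₂))
  | .embed U V Y => limp (limp (sprod U) (sprod V)) (sprod Y)

/-! ⊥-only basic formulas -/

def H00 (N : ℕ) : LF := limp (tpow bot (N+2)) (tpow bot 2)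
def C00 (N : ℕ) : LF := limp (limp (tpow (H00 N) 2) (tpow bot 3)) (tpow bot 3)
def H1 (N : ℕ) : LF := limp (tpow (C00 N) 4) (tpow bot N)

/-- `D_{p_m} = ((H₁ ⊸ ⊥^{m+4}) ⊸ ⊥^{m+4})`. -/
def Dl (N m : ℕ) : LF := limp (limp (H1 N) (tpow bot (m+4))) (tpow bot (m+4))

/-- `D_X`, the tensor product of `D_q` over the literals of a simple product `X`. -/
def DX (N : ℕ) : List ℕ → LF
  | [] => one
  | [q] => Dl N q
  | q :: r :: l => tensor (Dl N q) (DX N (r :: l))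

/-- `E_X = C₀₀^6 ⊗ D_X`. -/
def EX (N : ℕ) (X : List ℕ) : LF := tensor (tpow (C00 N) 6) (DX N X)

/-- The ⊥-only encoding `F_A` of a normalized formula `A`
(`p` is the distinguished leading literal). -/
def Fenc (N p : ℕ) : NF → LF
  | .horn X Y => limp (EX N (p :: X)) (EX N (p :: Y))
  | .ohorn X Y₁ Y₂ => limp (EX N (p :: X)) (oplus (EX N (p :: Y₁)) (EX N (p :: Y₂)))
  | .whorn X₁ Y₁ X₂ Y₂ =>
      witha (limp (EX N (p :: X₁)) (EX N (p :: Y₁))) (limp (EX N (p :: X₂)) (EX N (p :: Y₂)))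
  | .embed U V Y =>
      limp (limp (EX N (p :: U)) (EX N (p :: V))) (limp (EX N [p]) (EX N (p :: Y)))

/-! One-literal basic formulas (with leading literal `p`). -/

def H0t (N p : ℕ) : LF := cimp (N+2) (lit p) (tpow (lit p) 2)
def C0t (N p : ℕ) : LF := limp (cimp 2 (H0t N p) (tpow (lit p) 3)) (tpow (lit p) 3)
def H1t (N p : ℕ) : LF := cimp 4 (C0t N p) (tpow (lit p) N)
def Dt (N p m : ℕ) : LF :=
  limp (limp (H1t N p) (tpow (lit p) (m+4))) (tpow (lit p) (m+4))

def Gt (N p : ℕ) : List ℕ → LF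
  | [] => lit p
  | q :: l => limp (Dt N p q) (Gt N p l)

def Et (N p : ℕ) (X : List ℕ) : LF := cimp 6 (C0t N p) (Gt N p X)

/-- The one-literal encoding `F̃_A(p)`. -/
def Ften (N p : ℕ) : NF → LF
  | .horn X Y => limp (Et N p (p :: Y)) (Et N p (p :: X))
  | .ohorn X Y₁ Y₂ =>
      limp (witha (Et N p (p :: Y₁)) (Et N p (p :: Y₂))) (Et N p (p :: X))
  | .whorn X₁ Y₁ X₂ Y₂ =>
      witha (limp (Et N p (p :: Y₁)) (Et N p (p :: X₁)))
            (limp (Et N p (p :: Y₂)) (Et N p (p :: X₂)))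
  | .embed U V Y =>
      limp (limp (limp (Et N p (p :: Y)) (Et N p [p])) (lit p))
           (limp (limp (Et N p (p :: V)) (Et N p (p :: U))) (lit p))

/-- Substitution of `⊥` for the literal `p`. -/
def subB (p : ℕ) : LF → LF
  | lit q => if q = p then bot else lit q
  | bot => bot
  | one => one
  | tensor A B => tensor (subB p A) (subB p B)
  | par A B => par (subB p A) (subB p B)
  | limp A B => limp (subB p A) (subB p B)
  | witha A B => witha (subB p A) (subB p B)
  | oplus A B => oplus (subB p A) (subB p B)
  | bang A => bang (subB p A)

/-! Unit-only basic formulas. -/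

def H01 (N : ℕ) : LF := limp (ppow one 2) (ppow one (N+2))
def C01 (N : ℕ) : LF := limp (ppow one 3) (tensor (ppow one 3) (tensor (H01 N) (H01 N)))

def Gl (N m : ℕ) : LF :=
  tensor (ppow one (m+4)) (limp (ppow one (m+4)) (tensor (ppow one N) (tpow (C01 N) 4)))

def GX (N : ℕ) : List ℕ → LF
  | [] => bot
  | [q] => Gl N q
  | q :: r :: l => par (Gl N q) (GX N (r :: l))

def E1 (N : ℕ) (X : List ℕ) : LF := limp (tpow (C01 N) 6) (GX N X)

/-- The unit-only encoding `F¹_A`. -/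
def F1enc (N p : ℕ) : NF → LF
  | .horn X Y => limp (E1 N (p :: Y)) (E1 N (p :: X))
  | .ohorn X Y₁ Y₂ =>
      limp (witha (E1 N (p :: Y₁)) (E1 N (p :: Y₂))) (E1 N (p :: X))
  | .whorn X₁ Y₁ X₂ Y₂ =>
      witha (limp (E1 N (p :: Y₁)) (E1 N (p :: X₁)))
            (limp (E1 N (p :: Y₂)) (E1 N (p :: X₂)))
  | .embed U V Y =>
      limp (limp (E1 N (p :: V)) (E1 N (p :: U)))
           (limp (E1 N (p :: Y)) (E1 N [p]))

/-- Two-sided sequent calculus for classical propositional linear logic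
(Table 1 of the paper); contexts are multisets, so exchange is implicit. -/
inductive Derives : Multiset LF → Multiset LF → Prop where
  | id (A : LF) : Derives {A} {A}
  | limpL {S1 S2 T1 T2 : Multiset LF} {A B : LF} :
      Derives S1 (A ::ₘ T1) → Derives (B ::ₘ S2) T2 →
      Derives (limp A B ::ₘ (S1 + S2)) (T1 + T2)
  | limpR {S T : Multiset LF} {A B : LF} :
      Derives (A ::ₘ S) (B ::ₘ T) → Derives S (limp A B ::ₘ T)
  | tensorL {S T : Multiset LF} {A B : LF} :
      Derives (A ::ₘ B ::ₘ S) T → Derives (tensor A B ::ₘ S) T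
  | tensorR {S1 S2 T1 T2 : Multiset LF} {A B : LF} :
      Derives S1 (A ::ₘ T1) → Derives S2 (B ::ₘ T2) →
      Derives (S1 + S2) (tensor A B ::ₘ (T1 + T2))
  | parL {S1 S2 T1 T2 : Multiset LF} {A B : LF} :
      Derives (A ::ₘ S1) T1 → Derives (B ::ₘ S2) T2 →
      Derives (par A B ::ₘ (S1 + S2)) (T1 + T2)
  | parR {S T : Multiset LF} {A B : LF} :
      Derives S (A ::ₘ B ::ₘ T) → Derives S (par A B ::ₘ T)
  | oplusL {S T : Multiset LF} {A B : LF} :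
      Derives (A ::ₘ S) T → Derives (B ::ₘ S) T → Derives (oplus A B ::ₘ S) T
  | oplusR1 {S T : Multiset LF} {A B : LF} :
      Derives S (A ::ₘ T) → Derives S (oplus A B ::ₘ T)
  | oplusR2 {S T : Multiset LF} {A B : LF} :
      Derives S (B ::ₘ T) → Derives S (oplus A B ::ₘ T)
  | withL1 {S T : Multiset LF} {A B : LF} :
      Derives (A ::ₘ S) T → Derives (witha A B ::ₘ S) T
  | withL2 {S T : Multiset LF} {A B : LF} :
      Derives (B ::ₘ S) T → Derives (witha A B ::ₘ S) T
  | withR {S T : Multiset LF} {A B : LF} :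
      Derives S (A ::ₘ T) → Derives S (B ::ₘ T) → Derives S (witha A B ::ₘ T)
  | bangL {S T : Multiset LF} {A : LF} :
      Derives (A ::ₘ S) T → Derives (bang A ::ₘ S) T
  | bangR {S : Multiset LF} {C : LF} :
      Derives (S.map bang) {C} → Derives (S.map bang) {bang C}
  | weakL {S T : Multiset LF} {A : LF} :
      Derives S T → Derives (bang A ::ₘ S) T
  | contrL {S T : Multiset LF} {A : LF} :
      Derives (bang A ::ₘ bang A ::ₘ S) T → Derives (bang A ::ₘ S) T
  | botL : Derives {bot} 0
  | botR {S T : Multiset LF} : Derives S T → Derives S (bot ::ₘ T)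
  | oneL {S T : Multiset LF} : Derives S T → Derives (one ::ₘ S) T
  | oneR : Derives 0 {one}

/-! Every building block of `E_X` has a `#⊥` that is a multiple of `N`; the `D_q` contribute
multiples of `9N`, while `C₀₀^6` contributes `-12N ≡ 6N`. Hence all `E_{p⊗X}` have the same
`#⊥` modulo `9N`, and `⊸`, `⊕`, `&` between them only take differences, maxima and minima. -/

theorem Int.ModEq.max {n a b c : ℤ} (ha : a ≡ c [ZMOD n]) (hb : b ≡ c [ZMOD n]) :
    max a b ≡ c [ZMOD n] := by
  rcases max_choice a b with h | h <;> rw [h] <;> assumption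

theorem Int.ModEq.min {n a b c : ℤ} (ha : a ≡ c [ZMOD n]) (hb : b ≡ c [ZMOD n]) :
    min a b ≡ c [ZMOD n] := by
  rcases min_choice a b with h | h <;> rw [h] <;> assumption

theorem botCount_tpow (A : LF) : ∀ n : ℕ, botCount (tpow A n) = n * botCount A
  | 0 => by simp [tpow, botCount]
  | 1 => by simp [tpow]
  | n + 2 => by
      rw [tpow, botCount, botCount_tpow A (n + 1)]
      push_cast
      ring

theorem botCount_H00 (N : ℕ) : botCount (H00 N) = -N := by
  simp only [H00, botCount, botCount_tpow]
  push_cast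
  ring

theorem botCount_C00 (N : ℕ) : botCount (C00 N) = -2 * N := by
  simp only [C00, botCount, botCount_tpow, botCount_H00]
  push_cast
  ring

theorem botCount_H1 (N : ℕ) : botCount (H1 N) = 9 * N := by
  simp only [H1, botCount, botCount_tpow, botCount_C00]
  push_cast
  ring

theorem botCount_Dl (N m : ℕ) : botCount (Dl N m) = 9 * N := by
  simp only [Dl, botCount, botCount_H1]
  ring

theorem botCount_DX (N : ℕ) : ∀ X : List ℕ, botCount (DX N X) = 9 * N * X.length
  | [] => by simp [DX, botCount]
  | [q] => by simp [DX, botCount_Dl]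
  | q :: r :: X => by
      rw [DX, botCount, botCount_Dl, botCount_DX N (r :: X)]
      simp only [List.length_cons]
      push_cast
      ring

theorem botCount_EX (N : ℕ) (X : List ℕ) :
    botCount (EX N X) = 9 * N * X.length - 12 * N := by
  simp only [EX, botCount, botCount_tpow, botCount_C00, botCount_DX]
  push_cast
  ring

theorem botCount_EX_modEq (N : ℕ) (X : List ℕ) :
    botCount (EX N X) ≡ 6 * N [ZMOD 9 * N] :=
  Int.modEq_iff_dvd.mpr ⟨2 - X.length, by rw [botCount_EX]; ring⟩

theorem botCount_Fenc_general (N p : ℕ) (A : NF) :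
    botCount (Fenc N p A) ≡ 0 [ZMOD (9 * (N : ℤ))] := by
  have hE := botCount_EX_modEq N
  cases A with
  | horn X Y => simpa [Fenc, botCount] using (hE (p :: Y)).sub (hE (p :: X))
  | ohorn X Y₁ Y₂ =>
      simpa [Fenc, botCount] using ((hE (p :: Y₁)).max (hE (p :: Y₂))).sub (hE (p :: X))
  | whorn X₁ Y₁ X₂ Y₂ =>
      simpa [Fenc, botCount] using
        ((hE (p :: Y₁)).sub (hE (p :: X₁))).min ((hE (p :: Y₂)).sub (hE (p :: X₂)))
  | embed U V Y =>
      simpa [Fenc, botCount] using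
        ((hE (p :: Y)).sub (hE [p])).sub ((hE (p :: V)).sub (hE (p :: U)))

/-- for every normalized formula `A`, the ⊥-only encoding `F_A`
satisfies `#⊥(F_A) ≡ 0 (mod 9N)`. -/
theorem botCount_Fenc (N p : ℕ) (hN : 0 < N) (A : NF) (hA : A.ok) :
    botCount (Fenc N p A) ≡ 0 [ZMOD (9 * (N : ℤ))] :=
  botCount_Fenc_general N p A
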